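/- The set of derivations of the Leibniz algebra L₂ is a linear subspace of End(V) of dimension 4. -/

import Mathlib

/-- `V = ℂ⁴`. -/
abbrev V : Type := Fin 4 → ℂ

/-- standard basis: `e 0 = e₁`, ..., `e 3 = e₄`. -/
def e (i : Fin 4) : V := Pi.single i 1

/-- Bracket of the Leibniz algebra `L₂`:
`⟦e₁,e₁⟧ = e₃`, `⟦e₁,e₂⟧ = e₄`, `⟦e₂,e₁⟧ = e₃`, `⟦e₃,e₁⟧ = e₄`,
all other basis products zero. -/
def br (x y : V) : V :=
  (x 0 * y 0 + x 1 * y 0) • e 2 + (x 0 * y 1 + x 2 * y 0) • e 3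

/-- A derivation. -/
def IsDer (d : V →ₗ[ℂ] V) : Prop :=
  ∀ x y : V, d (br x y) = br (d x) y + br x (d y)

/-!
Since `e₃ = ⟦e₁,e₁⟧` and `e₄ = ⟦e₁,e₂⟧`, a derivation is determined by `d e₁` and `d e₂`. The
derivation identities on the basis pairs `(e₁,e₁), (e₂,e₁), (e₁,e₂), (e₃,e₁), (e₂,e₂)` force
`(d e₁)₁ = (d e₂)₁ = 0`, `(d e₂)₂ = (d e₁)₂` and `(d e₂)₃ = (d e₁)₂ + (d e₁)₃`, leaving the four
coordinates `(d e₁)₂, (d e₁)₃, (d e₁)₄, (d e₂)₄` free; conversely every choice of them gives a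
derivation, depending linearly and injectively on the choice.
-/

section

variable {R M : Type*} [CommSemiring R] [AddCommMonoid M] [Module R M]

def derivations (B : M →ₗ[R] M →ₗ[R] M) : Submodule R (Module.End R M) where
  carrier := {d | ∀ x y, d (B x y) = B (d x) y + B x (d y)}
  zero_mem' := by simp
  add_mem' {d₁ d₂} h₁ h₂ x y := by
    simp only [LinearMap.add_apply, map_add, h₁ x y, h₂ x y]
    abel
  smul_mem' c d h x y := by simp [h x y]

end

theorem e_apply (i k : Fin 4) : e i k = if k = i then 1 else 0 := Pi.single_apply i 1 k

theorem br_eq (x y : V) : br x y = ![0, 0, (x 0 + x 1) * y 0, x 0 * y 1 + x 2 * y 0] := by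
  ext k; fin_cases k <;> simp [br, e_apply, add_mul]

def brₗ : V →ₗ[ℂ] V →ₗ[ℂ] V :=
  LinearMap.mk₂ ℂ br
    (by intros; ext k; fin_cases k <;> simp [br_eq] <;> ring)
    (by intros; ext k; fin_cases k <;> simp [br_eq] <;> ring)
    (by intros; ext k; fin_cases k <;> simp [br_eq] <;> ring)
    (by intros; ext k; fin_cases k <;> simp [br_eq] <;> ring)

@[simp]
theorem brₗ_apply (x y : V) : brₗ x y = br x y := rfl

theorem brₗ_e_e :
    brₗ (e 0) (e 0) = e 2 ∧ brₗ (e 1) (e 0) = e 2 ∧ brₗ (e 0) (e 1) = e 3 ∧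
      brₗ (e 2) (e 0) = e 3 ∧ brₗ (e 1) (e 1) = 0 := by
  refine ⟨?_, ?_, ?_, ?_, ?_⟩ <;> ext k <;> fin_cases k <;> simp [br_eq, e_apply]

theorem ext_of_mem_derivations_brₗ {d₁ d₂ : Module.End ℂ V} (h₁ : d₁ ∈ derivations brₗ)
    (h₂ : d₂ ∈ derivations brₗ) (he₀ : d₁ (e 0) = d₂ (e 0)) (he₁ : d₁ (e 1) = d₂ (e 1)) :
    d₁ = d₂ := by
  obtain ⟨h₀₀, -, h₀₁, -, -⟩ := brₗ_e_e
  have he₂ : d₁ (e 2) = d₂ (e 2) := by rw [← h₀₀, h₁, h₂, he₀]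
  have he₃ : d₁ (e 3) = d₂ (e 3) := by rw [← h₀₁, h₁, h₂, he₀, he₁]
  refine LinearMap.pi_ext' fun j => LinearMap.ext_ring ?_
  fin_cases j <;> assumption

theorem coord_relations_of_mem_derivations_brₗ {d : Module.End ℂ V}
    (hd : d ∈ derivations brₗ) :
    d (e 0) 0 = 0 ∧ d (e 1) 0 = 0 ∧ d (e 1) 1 = d (e 0) 1 ∧
      d (e 1) 2 = d (e 0) 1 + d (e 0) 2 := by
  obtain ⟨h₀₀, h₁₀, h₀₁, h₂₀, h₁₁⟩ := brₗ_e_e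
  have e₀₀ := h₀₀ ▸ hd (e 0) (e 0)
  have e₁₀ := h₁₀ ▸ hd (e 1) (e 0)
  have e₀₁ := h₀₁ ▸ hd (e 0) (e 1)
  have e₂₀ := h₂₀ ▸ hd (e 2) (e 0)
  have e₁₁ := map_zero d ▸ h₁₁ ▸ hd (e 1) (e 1)
  have r₂ : d (e 2) 2 = d (e 0) 0 + d (e 0) 1 + d (e 0) 0 := by
    simpa [br_eq, e_apply] using congrFun e₀₀ 2
  have r₂' : d (e 2) 2 = d (e 1) 0 + d (e 1) 1 + d (e 0) 0 := by
    simpa [br_eq, e_apply] using congrFun e₁₀ 2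
  have r₃ : d (e 2) 3 = d (e 0) 2 + d (e 0) 1 := by simpa [br_eq, e_apply] using congrFun e₀₀ 3
  have r₃' : d (e 2) 3 = d (e 1) 2 := by simpa [br_eq, e_apply] using congrFun e₁₀ 3
  have s₃ : d (e 3) 3 = d (e 0) 0 + d (e 1) 1 := by simpa [br_eq, e_apply] using congrFun e₀₁ 3
  have s₃' : d (e 3) 3 = d (e 2) 2 + d (e 0) 0 := by simpa [br_eq, e_apply] using congrFun e₂₀ 3
  have q₀ : 0 = d (e 1) 0 := by simpa [br_eq, e_apply] using congrFun e₁₁ 2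
  have hp₀ : d (e 0) 0 = 0 := by linear_combination -r₂' + s₃ - s₃' + q₀
  exact ⟨hp₀, q₀.symm, by linear_combination r₂ - r₂' + hp₀ + q₀, by linear_combination r₃ - r₃'⟩

def derivationOfParams : (Fin 4 → ℂ) →ₗ[ℂ] Module.End ℂ V :=
  LinearMap.mk₂ ℂ (fun c x => ![0, c 0 * (x 0 + x 1), c 0 * (x 1 + x 2) + c 1 * (x 0 + x 1),
      c 2 * x 0 + c 3 * x 1 + (c 0 + c 1) * x 2 + c 0 * x 3])
    (by intros; ext k; fin_cases k <;> simp <;> ring)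
    (by intros; ext k; fin_cases k <;> simp <;> ring)
    (by intros; ext k; fin_cases k <;> simp <;> ring)
    (by intros; ext k; fin_cases k <;> simp <;> ring)

theorem derivationOfParams_apply (c x : Fin 4 → ℂ) :
    derivationOfParams c x = ![0, c 0 * (x 0 + x 1), c 0 * (x 1 + x 2) + c 1 * (x 0 + x 1),
      c 2 * x 0 + c 3 * x 1 + (c 0 + c 1) * x 2 + c 0 * x 3] := rfl

theorem derivationOfParams_mem (c : Fin 4 → ℂ) : derivationOfParams c ∈ derivations brₗ := by
  intro x y
  simp only [brₗ_apply, br_eq, derivationOfParams_apply]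
  ext k; fin_cases k <;> simp <;> ring

theorem derivationOfParams_injective : Function.Injective derivationOfParams := by
  refine (injective_iff_map_eq_zero _).2 fun c hc => ?_
  have h₀ (k : Fin 4) : derivationOfParams c (e 0) k = 0 := by rw [hc]; rfl
  have h₁₃ : derivationOfParams c (e 1) 3 = 0 := by rw [hc]; rfl
  ext i; fin_cases i
  · simpa [derivationOfParams_apply, e_apply] using h₀ 1
  · simpa [derivationOfParams_apply, e_apply] using h₀ 2
  · simpa [derivationOfParams_apply, e_apply] using h₀ 3
  · simpa [derivationOfParams_apply, e_apply] using h₁₃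

theorem eq_derivationOfParams_of_mem {d : Module.End ℂ V} (hd : d ∈ derivations brₗ) :
    d = derivationOfParams ![d (e 0) 1, d (e 0) 2, d (e 0) 3, d (e 1) 3] := by
  obtain ⟨hp₀, hq₀, hq₁, hq₂⟩ := coord_relations_of_mem_derivations_brₗ hd
  refine ext_of_mem_derivations_brₗ hd (derivationOfParams_mem _) ?_ ?_ <;>
    ext k <;> fin_cases k <;> simp [derivationOfParams_apply, e_apply, hp₀, hq₀, hq₁, hq₂]

theorem derivations_brₗ_eq_range : derivations brₗ = LinearMap.range derivationOfParams := by
  ext d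
  refine ⟨fun hd => ⟨_, (eq_derivationOfParams_of_mem hd).symm⟩, ?_⟩
  rintro ⟨c, rfl⟩
  exact derivationOfParams_mem c

theorem derivations_of_L2 :
    ∃ S : Submodule ℂ (V →ₗ[ℂ] V),
      (S : Set (V →ₗ[ℂ] V)) = {d | IsDer d} ∧ Module.finrank ℂ S = 4 := by
  refine ⟨derivations brₗ, rfl, ?_⟩
  rw [derivations_brₗ_eq_range, LinearMap.finrank_range_of_inj derivationOfParams_injective,
    Module.finrank_fin_fun]
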